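/- arXiv:2401.03566 — 5 statements merged into one kernel-verified Lean document; each statement's English description precedes it below -/
import Mathlib

section
/- For every n ≥ 2, the root system of type B_n, realized as {±e_i : 1 ≤ i ≤ n} ∪ {±e_i ± e_j : 1 ≤ i < j ≤ n} ⊆ ℤ^n, admits no partition into m ≥ 3 nonempty parts Δ_1, …, Δ_m such that each Δ_i and each Δ_i ⊔ Δ_j is closed. -/
/-- Standard basis vector `e i` in `ℤ^n`. -/
def eb {n : ℕ} (i : Fin n) : Fin n → ℤ := fun k => if k = i then 1 else 0

/-- A subset `S` of a root system `Δ` is closed if `α, β ∈ S` and `α + β ∈ Δ`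
imply `α + β ∈ S`. -/
def RootClosed {n : ℕ} (Δ S : Set (Fin n → ℤ)) : Prop :=
  ∀ a ∈ S, ∀ b ∈ S, a + b ∈ Δ → a + b ∈ S

/-- The root system of type `B_n`: short roots `±e_i` and long roots `±e_i ± e_j`
for `i < j`. -/
def rootsB (n : ℕ) : Set (Fin n → ℤ) :=
  {v | (∃ i, v = eb i ∨ v = -eb i) ∨
       (∃ i j, i < j ∧ (v = eb i + eb j ∨ v = eb i - eb j ∨
                        v = -eb i + eb j ∨ v = -eb i - eb j))}

/-!
Colour each root by the part containing it. Closedness of the parts and of their pairwise unions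
means that the colour of a root `α + β` is the colour of `α` or of `β`. In the `B₂` spanned by
`e_i, e_j`, writing `u + w` for a long root with `u = ±e_i`, `w = ±e_j`, the relations
`w = (u + w) + (-u)` and `u = (u + w) + (-w)` force the colour of `w` to be one of those of
`±e_i`, or the colour of `u` one of those of `±e_j`. Hence if `±e_i` carry two colours, every
`±e_j` carries one of them, and if every pair `±e_i` is monochromatic, all of them share one
colour. Long roots are sums of short ones, so at most two colours occur, while `m ≥ 3` nonempty
parts need three.
-/

variable {n : ℕ}

def IsShortRootAt (i : Fin n) (u : Fin n → ℤ) : Prop := u = eb i ∨ u = -eb i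

lemma isShortRootAt_eb (i : Fin n) : IsShortRootAt i (eb i) := Or.inl rfl

lemma isShortRootAt_neg_eb (i : Fin n) : IsShortRootAt i (-eb i) := Or.inr rfl

namespace IsShortRootAt

variable {i j : Fin n} {u w : Fin n → ℤ}

lemma neg (hu : IsShortRootAt i u) : IsShortRootAt i (-u) := by
  rcases hu with rfl | rfl
  · exact isShortRootAt_neg_eb i
  · simpa using isShortRootAt_eb i

lemma mem_rootsB (hu : IsShortRootAt i u) : u ∈ rootsB n := Or.inl ⟨i, hu⟩

lemma add_mem_rootsB_of_lt (hij : i < j) (hu : IsShortRootAt i u) (hw : IsShortRootAt j w) :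
    u + w ∈ rootsB n := by
  refine Or.inr ⟨i, j, hij, ?_⟩
  rcases hu with rfl | rfl <;> rcases hw with rfl | rfl <;> simp [sub_eq_add_neg]

lemma add_mem_rootsB (hij : i ≠ j) (hu : IsShortRootAt i u) (hw : IsShortRootAt j w) :
    u + w ∈ rootsB n := by
  rcases hij.lt_or_gt with h | h
  · exact add_mem_rootsB_of_lt h hu hw
  · exact add_comm w u ▸ add_mem_rootsB_of_lt h hw hu

end IsShortRootAt

lemma exists_isShortRootAt_of_mem_rootsB {v : Fin n → ℤ} (hv : v ∈ rootsB n) :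
    (∃ i, IsShortRootAt i v) ∨
      ∃ i j u w, i ≠ j ∧ IsShortRootAt i u ∧ IsShortRootAt j w ∧ v = u + w := by
  rcases hv with hv | ⟨i, j, hij, hv⟩
  · exact Or.inl hv
  · right
    have hij := hij.ne
    rcases hv with rfl | rfl | rfl | rfl
    · exact ⟨i, j, _, _, hij, isShortRootAt_eb i, isShortRootAt_eb j, rfl⟩
    · exact ⟨i, j, _, _, hij, isShortRootAt_eb i, isShortRootAt_neg_eb j, sub_eq_add_neg _ _⟩
    · exact ⟨i, j, _, _, hij, isShortRootAt_neg_eb i, isShortRootAt_eb j, rfl⟩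
    · exact ⟨i, j, _, _, hij, isShortRootAt_neg_eb i, isShortRootAt_neg_eb j, sub_eq_add_neg _ _⟩

def RespectsRootSums {ι : Type*} (Δ : Set (Fin n → ℤ)) (c : (Fin n → ℤ) → ι) : Prop :=
  ∀ a ∈ Δ, ∀ b ∈ Δ, a + b ∈ Δ → c (a + b) = c a ∨ c (a + b) = c b

lemma respectsRootSums_of_partition {ι : Type*} {Δ : Set (Fin n → ℤ)} {P : ι → Set (Fin n → ℤ)}
    {c : (Fin n → ℤ) → ι} (hP : ∀ v ∈ Δ, ∀ i, v ∈ P i ↔ c v = i)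
    (hclosed : ∀ i, RootClosed Δ (P i)) (hclosed₂ : ∀ i j, i ≠ j → RootClosed Δ (P i ∪ P j)) :
    RespectsRootSums Δ c := by
  intro a ha b hb hab
  have haP : a ∈ P (c a) := (hP a ha _).2 rfl
  have hbP : b ∈ P (c b) := (hP b hb _).2 rfl
  by_cases h : c a = c b
  · exact Or.inl ((hP _ hab _).1 (hclosed _ a haP b (h ▸ hbP) hab))
  · exact (hclosed₂ _ _ h a (Or.inl haP) b (Or.inr hbP) hab).imp (hP _ hab _).1 (hP _ hab _).1

namespace RespectsRootSums

variable {ι : Type*} {c : (Fin n → ℤ) → ι} (hc : RespectsRootSums (rootsB n) c)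
include hc

lemma eq_or_eq {a b s : Fin n → ℤ} (ha : a ∈ rootsB n) (hb : b ∈ rootsB n) (hs : s ∈ rootsB n)
    (hab : a + b = s) : c s = c a ∨ c s = c b :=
  hab ▸ hc a ha b hb (hab ▸ hs)

lemma exists_isShortRootAt_color_eq {v : Fin n → ℤ} (hv : v ∈ rootsB n) :
    ∃ i u, IsShortRootAt i u ∧ c v = c u := by
  rcases exists_isShortRootAt_of_mem_rootsB hv with ⟨i, hi⟩ | ⟨i, j, u, w, hij, hu, hw, rfl⟩
  · exact ⟨i, v, hi, rfl⟩
  · rcases hc.eq_or_eq hu.mem_rootsB hw.mem_rootsB hv rfl with h | h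
    · exact ⟨i, u, hu, h⟩
    · exact ⟨j, w, hw, h⟩

lemma color_mem_or_color_mem {i j : Fin n} {u w : Fin n → ℤ} (hij : i ≠ j)
    (hu : IsShortRootAt i u) (hw : IsShortRootAt j w) :
    c w ∈ ({c u, c (-u)} : Set ι) ∨ c u ∈ ({c w, c (-w)} : Set ι) := by
  have hx := hu.add_mem_rootsB hij hw
  have hw' : c w = c (u + w) ∨ c w = c (-u) :=
    hc.eq_or_eq hx hu.neg.mem_rootsB hw.mem_rootsB (by abel)
  have hu' : c u = c (u + w) ∨ c u = c (-w) :=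
    hc.eq_or_eq hx hw.neg.mem_rootsB hu.mem_rootsB (by abel)
  rcases hc.eq_or_eq hu.mem_rootsB hw.mem_rootsB hx rfl with h | h
  · exact Or.inl (h ▸ hw')
  · exact Or.inr (h ▸ hu')

lemma color_mem_of_ne {i j : Fin n} {w : Fin n → ℤ} (hi : c (eb i) ≠ c (-eb i))
    (hw : IsShortRootAt j w) : c w ∈ ({c (eb i), c (-eb i)} : Set ι) := by
  obtain rfl | hij := eq_or_ne i j
  · rcases hw with rfl | rfl <;> simp
  by_contra hcw
  -- then `e_i` and `-e_i` both have the colour of `-w`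
  simp only [Set.mem_insert_iff, Set.mem_singleton_iff, not_or] at hcw
  have hpos := (hc.color_mem_or_color_mem hij (isShortRootAt_eb i) hw).resolve_left
    (by simpa using hcw)
  have hneg := (hc.color_mem_or_color_mem hij (isShortRootAt_neg_eb i) hw).resolve_left
    (by simpa [or_comm] using hcw)
  simp only [Set.mem_insert_iff, Set.mem_singleton_iff] at hpos hneg
  exact hi ((hpos.resolve_left (Ne.symm hcw.1)).trans (hneg.resolve_left (Ne.symm hcw.2)).symm)

lemma color_eb_eq {i j : Fin n} (hi : c (eb i) = c (-eb i)) (hj : c (eb j) = c (-eb j)) :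
    c (eb i) = c (eb j) := by
  obtain rfl | hij := eq_or_ne i j
  · rfl
  rcases hc.color_mem_or_color_mem hij (isShortRootAt_eb i) (isShortRootAt_eb j) with h | h <;>
    simp only [← hi, ← hj, Set.mem_insert_iff, Set.mem_singleton_iff, or_self] at h
  exacts [h.symm, h]

lemma color_eq_or_eq_or_eq {u v w : Fin n → ℤ} (hu : u ∈ rootsB n) (hv : v ∈ rootsB n)
    (hw : w ∈ rootsB n) : c u = c v ∨ c u = c w ∨ c v = c w := by
  obtain ⟨i, u', hu', hcu⟩ := hc.exists_isShortRootAt_color_eq hu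
  obtain ⟨j, v', hv', hcv⟩ := hc.exists_isShortRootAt_color_eq hv
  obtain ⟨k, w', hw', hcw⟩ := hc.exists_isShortRootAt_color_eq hw
  rw [hcu, hcv, hcw]
  by_cases h : ∃ l, c (eb l) ≠ c (-eb l)
  · obtain ⟨l, hl⟩ := h
    have h₁ := hc.color_mem_of_ne hl hu'
    have h₂ := hc.color_mem_of_ne hl hv'
    have h₃ := hc.color_mem_of_ne hl hw'
    simp only [Set.mem_insert_iff, Set.mem_singleton_iff] at h₁ h₂ h₃
    grind
  · push Not at h
    have hmono : ∀ {l x}, IsShortRootAt l x → c x = c (eb l) := by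
      rintro l x (rfl | rfl)
      exacts [rfl, (h l).symm]
    exact Or.inl ((hmono hu').trans ((hc.color_eb_eq (h i) (h j)).trans (hmono hv').symm))

end RespectsRootSums

theorem stmt5_general (n : ℕ) (m : ℕ) (hm : 3 ≤ m) :
    ¬ ∃ P : Fin m → Set (Fin n → ℤ),
      (⋃ i, P i) = rootsB n ∧
      (∀ i, (P i).Nonempty) ∧
      (Pairwise fun i j => Disjoint (P i) (P j)) ∧
      (∀ i, RootClosed (rootsB n) (P i)) ∧
      (∀ i j, i ≠ j → RootClosed (rootsB n) (P i ∪ P j)) := by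
  rintro ⟨P, hU, hne, hdisj, hclosed, hclosed₂⟩
  have hmem : ∀ i, P i ⊆ rootsB n := fun i => hU ▸ Set.subset_iUnion P i
  have hcover : ∀ v ∈ rootsB n, ∃ i, v ∈ P i := fun v hv => Set.mem_iUnion.1 (hU ▸ hv)
  have : Nonempty (Fin m) := ⟨⟨0, by omega⟩⟩
  choose! c hc using hcover
  have hP : ∀ v ∈ rootsB n, ∀ i, v ∈ P i ↔ c v = i := fun v hv i =>
    ⟨fun hi => by_contra fun h => Set.disjoint_left.1 (hdisj h) (hc v hv) hi,
      fun h => h ▸ hc v hv⟩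
  have hcolors := respectsRootSums_of_partition hP hclosed hclosed₂
  obtain ⟨v₀, h₀⟩ := hne ⟨0, by omega⟩
  obtain ⟨v₁, h₁⟩ := hne ⟨1, by omega⟩
  obtain ⟨v₂, h₂⟩ := hne ⟨2, by omega⟩
  have htwo := hcolors.color_eq_or_eq_or_eq (hmem _ h₀) (hmem _ h₁) (hmem _ h₂)
  rw [(hP _ (hmem _ h₀) _).1 h₀, (hP _ (hmem _ h₁) _).1 h₁, (hP _ (hmem _ h₂) _).1 h₂] at htwo
  simp [Fin.ext_iff] at htwo

theorem stmt5 (n : ℕ) (hn : 2 ≤ n) (m : ℕ) (hm : 3 ≤ m) :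
    ¬ ∃ P : Fin m → Set (Fin n → ℤ),
      (⋃ i, P i) = rootsB n ∧
      (∀ i, (P i).Nonempty) ∧
      (Pairwise fun i j => Disjoint (P i) (P j)) ∧
      (∀ i, RootClosed (rootsB n) (P i)) ∧
      (∀ i j, i ≠ j → RootClosed (rootsB n) (P i ∪ P j)) :=
  stmt5_general n m hm
end

section
/- For every n ≥ 3, the root system of type C_n, realized as {±2e_i : 1 ≤ i ≤ n} ∪ {±e_i ± e_j : 1 ≤ i < j ≤ n} ⊆ ℤ^n, admits no partition into m ≥ 3 nonempty parts Δ_1, …, Δ_m such that each Δ_i and each Δ_i ⊔ Δ_j is closed. -/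
/-- The root system of type `C_n`: long roots `±2e_i` and short roots `±e_i ± e_j`
for `i < j`. -/
def rootsC (n : ℕ) : Set (Fin n → ℤ) :=
  {v | (∃ i, v = (2 : ℤ) • eb i ∨ v = -((2 : ℤ) • eb i)) ∨
       (∃ i j, i < j ∧ (v = eb i + eb j ∨ v = eb i - eb j ∨
                        v = -eb i + eb j ∨ v = -eb i - eb j))}

/-!
Colour each root by the part containing it. Closedness of the parts and of the unions of two
parts says exactly that a root `α + β` has the colour of `α` or of `β`. In the rank-two
subsystem spanned by `e i, e j`, the relations `(εe i + δe j) + (εe i - δe j) = 2εe i` and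
`2δe j + (εe i - δe j) = εe i + δe j` force every short root to share the colour of one of the
long roots `2εe i`, `2δe j`, and the long roots to use at most two colours: if `±2e i` have
different colours, every long root has one of these two, and if each pair `±2e i` is
monochromatic, all long roots share one colour. Hence at most two parts are nonempty.
-/

lemma Int.units_eq_or_eq_neg (u v : ℤˣ) : u = v ∨ u = -v :=
  (em (u = v)).imp_right Int.units_ne_iff_eq_neg.1

def IsSummandColoring {V ι : Type*} [Add V] (Δ : Set V) (c : V → ι) : Prop :=
  ∀ a ∈ Δ, ∀ b ∈ Δ, a + b ∈ Δ → c (a + b) = c a ∨ c (a + b) = c b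

lemma exists_isSummandColoring_of_partition {n : ℕ} {ι : Type*} [Nonempty ι]
    {Δ : Set (Fin n → ℤ)} {P : ι → Set (Fin n → ℤ)} (hU : ⋃ i, P i = Δ)
    (hdisj : Pairwise fun i j => Disjoint (P i) (P j)) (hcl : ∀ i, RootClosed Δ (P i))
    (hcl₂ : ∀ i j, i ≠ j → RootClosed Δ (P i ∪ P j)) :
    ∃ c : (Fin n → ℤ) → ι, (∀ i, ∀ v ∈ P i, c v = i) ∧ IsSummandColoring Δ c := by
  have hpart : ∀ v, ∃ i, v ∈ Δ → v ∈ P i := fun v => by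
    by_cases hv : v ∈ Δ
    · obtain ⟨i, hi⟩ := Set.mem_iUnion.1 (hU ▸ hv)
      exact ⟨i, fun _ => hi⟩
    · exact ⟨Classical.arbitrary ι, fun h => absurd h hv⟩
  choose c hc using hpart
  have hP : ∀ i, ∀ v ∈ P i, c v = i := fun i v hv => by
    by_contra hne
    exact Set.disjoint_left.1 (hdisj hne) (hc v (hU ▸ Set.mem_iUnion_of_mem i hv)) hv
  refine ⟨c, hP, fun a ha b hb hab => ?_⟩
  have hsum : a + b ∈ P (c a) ∪ P (c b) := by
    by_cases h : c a = c b
    · rw [h, Set.union_self]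
      exact hcl _ a (h ▸ hc a ha) b (hc b hb) hab
    · exact hcl₂ _ _ h a (Or.inl (hc a ha)) b (Or.inr (hc b hb)) hab
  exact hsum.imp (hP _ _) (hP _ _)

section rootsC

variable {n : ℕ}

def longRoot (i : Fin n) (ε : ℤˣ) : Fin n → ℤ := (2 * (ε : ℤ)) • eb i

def shortRoot (i j : Fin n) (ε δ : ℤˣ) : Fin n → ℤ := (ε : ℤ) • eb i + (δ : ℤ) • eb j

lemma shortRoot_comm (i j : Fin n) (ε δ : ℤˣ) : shortRoot i j ε δ = shortRoot j i δ ε :=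
  add_comm _ _

lemma shortRoot_add_shortRoot_neg (i j : Fin n) (ε δ : ℤˣ) :
    shortRoot i j ε δ + shortRoot i j ε (-δ) = longRoot i ε := by
  simp only [shortRoot, longRoot, Units.val_neg]
  module

lemma longRoot_add_shortRoot_neg (i j : Fin n) (ε δ : ℤˣ) :
    longRoot j δ + shortRoot i j ε (-δ) = shortRoot i j ε δ := by
  simp only [shortRoot, longRoot, Units.val_neg]
  module

lemma longRoot_mem_rootsC (i : Fin n) (ε : ℤˣ) : longRoot i ε ∈ rootsC n := by
  rcases Int.units_eq_one_or ε with rfl | rfl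
  · exact Or.inl ⟨i, Or.inl (by simp [longRoot])⟩
  · exact Or.inl ⟨i, Or.inr (by simp [longRoot])⟩

lemma shortRoot_mem_rootsC {i j : Fin n} (hij : i ≠ j) (ε δ : ℤˣ) :
    shortRoot i j ε δ ∈ rootsC n := by
  wlog hlt : i < j generalizing i j ε δ
  · rw [shortRoot_comm]
    exact this hij.symm δ ε (hij.lt_or_gt.resolve_left hlt)
  refine Or.inr ⟨i, j, hlt, ?_⟩
  rcases Int.units_eq_one_or ε with rfl | rfl <;> rcases Int.units_eq_one_or δ with rfl | rfl <;>
    simp [shortRoot, sub_eq_add_neg]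

lemma mem_rootsC_iff {v : Fin n → ℤ} :
    v ∈ rootsC n ↔ (∃ i ε, v = longRoot i ε) ∨ ∃ i j ε δ, i ≠ j ∧ v = shortRoot i j ε δ := by
  refine ⟨fun hv => ?_, ?_⟩
  · rcases hv with ⟨i, rfl | rfl⟩ | ⟨i, j, hij, rfl | rfl | rfl | rfl⟩
    · exact Or.inl ⟨i, 1, by simp [longRoot]⟩
    · exact Or.inl ⟨i, -1, by simp [longRoot]⟩
    · exact Or.inr ⟨i, j, 1, 1, hij.ne, by simp [shortRoot]⟩
    · exact Or.inr ⟨i, j, 1, -1, hij.ne, by simp [shortRoot, sub_eq_add_neg]⟩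
    · exact Or.inr ⟨i, j, -1, 1, hij.ne, by simp [shortRoot]⟩
    · exact Or.inr ⟨i, j, -1, -1, hij.ne, by simp [shortRoot, sub_eq_add_neg]⟩
  · rintro (⟨i, ε, rfl⟩ | ⟨i, j, ε, δ, hij, rfl⟩)
    · exact longRoot_mem_rootsC i ε
    · exact shortRoot_mem_rootsC hij ε δ

variable {ι : Type*} {c : (Fin n → ℤ) → ι} {i j : Fin n}

lemma exists_color_longRoot_eq_color_shortRoot (hc : IsSummandColoring (rootsC n) c)
    (hij : i ≠ j) (ε : ℤˣ) : ∃ δ, c (longRoot i ε) = c (shortRoot i j ε δ) := by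
  have h := hc _ (shortRoot_mem_rootsC hij ε 1) _ (shortRoot_mem_rootsC hij ε (-1))
    (shortRoot_add_shortRoot_neg i j ε 1 ▸ longRoot_mem_rootsC i ε)
  rw [shortRoot_add_shortRoot_neg] at h
  exact h.elim (⟨1, ·⟩) (⟨-1, ·⟩)

lemma color_shortRoot_eq_of_ne (hc : IsSummandColoring (rootsC n) c) (hij : i ≠ j)
    {ε δ : ℤˣ} (hne : c (shortRoot i j ε δ) ≠ c (longRoot j δ)) (δ' : ℤˣ) :
    c (shortRoot i j ε δ') = c (shortRoot i j ε δ) := by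
  rcases Int.units_eq_or_eq_neg δ' δ with rfl | rfl
  · rfl
  have h := hc _ (longRoot_mem_rootsC j δ) _ (shortRoot_mem_rootsC hij ε (-δ))
    (longRoot_add_shortRoot_neg i j ε δ ▸ shortRoot_mem_rootsC hij ε δ)
  rw [longRoot_add_shortRoot_neg] at h
  exact (h.resolve_left hne).symm

lemma color_shortRoot (hc : IsSummandColoring (rootsC n) c) (hij : i ≠ j) (ε δ : ℤˣ) :
    c (shortRoot i j ε δ) = c (longRoot i ε) ∨ c (shortRoot i j ε δ) = c (longRoot j δ) := by
  refine or_iff_not_imp_right.2 fun hne => ?_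
  obtain ⟨δ', hδ'⟩ := exists_color_longRoot_eq_color_shortRoot hc hij ε
  rw [hδ', color_shortRoot_eq_of_ne hc hij hne δ']

lemma color_longRoot_of_ne_neg (hc : IsSummandColoring (rootsC n) c) (hij : i ≠ j)
    {ε : ℤˣ} (hi : c (longRoot i ε) ≠ c (longRoot i (-ε))) (δ : ℤˣ) :
    c (longRoot j δ) = c (longRoot i ε) ∨ c (longRoot j δ) = c (longRoot i (-ε)) := by
  -- A third colour on `2δe j` spreads to both roots `±e i + δe j`, which forces both
  -- `±2εe i` to take the colour of `-2δe j`.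
  by_contra! hy
  have hy' : ∀ ε', c (longRoot j δ) ≠ c (longRoot i ε') := fun ε' => by
    rcases Int.units_eq_or_eq_neg ε' ε with rfl | rfl
    exacts [hy.1, hy.2]
  have hrow : ∀ ε', c (shortRoot i j ε' δ) = c (longRoot j δ) := by
    obtain ⟨ε₀, hε₀⟩ := exists_color_longRoot_eq_color_shortRoot hc hij.symm δ
    rw [shortRoot_comm] at hε₀
    intro ε'
    have hne : c (shortRoot j i δ ε₀) ≠ c (longRoot i ε₀) := by
      rw [← shortRoot_comm, ← hε₀]; exact hy' ε₀
    rw [shortRoot_comm, color_shortRoot_eq_of_ne hc hij.symm hne, ← shortRoot_comm, hε₀]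
  have hlong : ∀ ε', c (longRoot i ε') = c (longRoot j (-δ)) := fun ε' => by
    obtain ⟨δ', hδ'⟩ := exists_color_longRoot_eq_color_shortRoot hc hij ε'
    rcases Int.units_eq_or_eq_neg δ' δ with rfl | rfl
    · exact absurd (hδ'.trans (hrow ε')).symm (hy' ε')
    by_contra hne
    rw [hδ'] at hne
    exact hy' ε' (by rw [← hrow ε', color_shortRoot_eq_of_ne hc hij hne δ, hδ'])
  exact hi ((hlong ε).trans (hlong (-ε)).symm)

lemma color_longRoot_eq_of_eq_neg (hc : IsSummandColoring (rootsC n) c) (hij : i ≠ j)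
    (hi : ∀ ε, c (longRoot i ε) = c (longRoot i 1))
    (hj : ∀ δ, c (longRoot j δ) = c (longRoot j 1)) :
    c (longRoot i 1) = c (longRoot j 1) := by
  by_contra hne
  have hrow : ∀ ε δ, c (shortRoot i j ε δ) = c (longRoot i 1) := fun ε δ => by
    obtain ⟨δ', hδ'⟩ := exists_color_longRoot_eq_color_shortRoot hc hij ε
    rw [hi] at hδ'
    rw [color_shortRoot_eq_of_ne hc hij (by rw [← hδ', hj]; exact hne), hδ']
  obtain ⟨ε, hε⟩ := exists_color_longRoot_eq_color_shortRoot hc hij.symm 1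
  rw [shortRoot_comm, hrow] at hε
  exact hne hε.symm

theorem exists_two_colors [Nonempty ι] (hc : IsSummandColoring (rootsC n) c) :
    ∃ A B : ι, ∀ v ∈ rootsC n, c v = A ∨ c v = B := by
  suffices h : ∃ A B : ι, ∀ i ε, c (longRoot i ε) = A ∨ c (longRoot i ε) = B by
    obtain ⟨A, B, hAB⟩ := h
    refine ⟨A, B, fun v hv => ?_⟩
    rcases mem_rootsC_iff.1 hv with ⟨i, ε, rfl⟩ | ⟨i, j, ε, δ, hij, rfl⟩
    · exact hAB i ε
    · rcases color_shortRoot hc hij ε δ with h | h <;> rw [h] <;> exact hAB _ _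
  by_cases hasym : ∃ i, c (longRoot i 1) ≠ c (longRoot i (-1))
  · obtain ⟨i, hi⟩ := hasym
    refine ⟨c (longRoot i 1), c (longRoot i (-1)), fun j δ => ?_⟩
    rcases eq_or_ne j i with rfl | hji
    · rcases Int.units_eq_one_or δ with rfl | rfl
      exacts [Or.inl rfl, Or.inr rfl]
    · exact color_longRoot_of_ne_neg hc hji.symm hi δ
  push Not at hasym
  have hsym : ∀ i ε, c (longRoot i ε) = c (longRoot i 1) := fun i ε => by
    rcases Int.units_eq_one_or ε with rfl | rfl
    exacts [rfl, (hasym i).symm]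
  rcases isEmpty_or_nonempty (Fin n) with _ | ⟨⟨i₀⟩⟩
  · exact ⟨Classical.arbitrary ι, Classical.arbitrary ι, fun i => isEmptyElim i⟩
  refine ⟨c (longRoot i₀ 1), c (longRoot i₀ 1), fun j δ => Or.inl ?_⟩
  rw [hsym]
  rcases eq_or_ne j i₀ with rfl | hj
  · rfl
  · exact color_longRoot_eq_of_eq_neg hc hj (hsym j) (hsym i₀)

end rootsC

theorem stmt6_general (n : ℕ) (m : ℕ) (hm : 3 ≤ m) :
    ¬ ∃ P : Fin m → Set (Fin n → ℤ),
      (⋃ i, P i) = rootsC n ∧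
      (∀ i, (P i).Nonempty) ∧
      (Pairwise fun i j => Disjoint (P i) (P j)) ∧
      (∀ i, RootClosed (rootsC n) (P i)) ∧
      (∀ i j, i ≠ j → RootClosed (rootsC n) (P i ∪ P j)) := by
  rintro ⟨P, hU, hne, hdisj, hcl, hcl₂⟩
  have : Nonempty (Fin m) := ⟨⟨0, by omega⟩⟩
  obtain ⟨c, hcP, hc⟩ := exists_isSummandColoring_of_partition hU hdisj hcl hcl₂
  obtain ⟨A, B, hAB⟩ := exists_two_colors hc
  have hsub : (Finset.univ : Finset (Fin m)) ⊆ {A, B} := fun k _ => by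
    obtain ⟨v, hv⟩ := hne k
    simpa [hcP k v hv] using hAB v (hU ▸ Set.mem_iUnion_of_mem k hv)
  have := (Finset.card_le_card hsub).trans Finset.card_le_two
  rw [Finset.card_univ, Fintype.card_fin] at this
  omega

theorem stmt6 (n : ℕ) (hn : 3 ≤ n) (m : ℕ) (hm : 3 ≤ m) :
    ¬ ∃ P : Fin m → Set (Fin n → ℤ),
      (⋃ i, P i) = rootsC n ∧
      (∀ i, (P i).Nonempty) ∧
      (Pairwise fun i j => Disjoint (P i) (P j)) ∧
      (∀ i, RootClosed (rootsC n) (P i)) ∧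
      (∀ i j, i ≠ j → RootClosed (rootsC n) (P i ∪ P j)) :=
  stmt6_general n m hm
end

section
/- For every n ≥ 4, the root system of type D_n, realized as {±e_i ± e_j : 1 ≤ i < j ≤ n} ⊆ ℤ^n, admits no partition into m ≥ 3 nonempty parts Δ_1, …, Δ_m such that each Δ_i and each Δ_i ⊔ Δ_j is closed. -/
/-- The root system of type `D_n`: the vectors `±e_i ± e_j` for `i < j`. -/
def rootsD (n : ℕ) : Set (Fin n → ℤ) :=
  {v | ∃ i j, i < j ∧ (v = eb i + eb j ∨ v = eb i - eb j ∨
                       v = -eb i + eb j ∨ v = -eb i - eb j)}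

/-!
Color each root by the part containing it. Closedness of the parts and of their pairwise unions
says exactly that the color of a root `u + v` is that of `u` or that of `v`; such a coloring of
`D_n` takes at most two values.

Suppose `x` and `-x` have different colors and `y` is adjacent to `x` (`x + y` a root) with a
third color. In the `A₂` spanned by `x` and `y` the colors are then forced to rotate: writing
`x = f₀ - f₁`, `y = f₁ - f₂` with signed coordinate vectors `fₐ`, the color of `fₐ - f_b` depends
only on `b`. A fourth coordinate vector `g` rules this out by a pigeonhole argument on the colors
of `fₐ ± g` and `-fₐ - g`. So every root adjacent to `x` or `-x` has the color of `x` or `-x`,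
and these roots generate `D_n` under sums. If instead every root has the color of its negative,
adjacent roots share their color and the same generation argument makes the coloring constant.
-/

open Function

section Fin3

variable {α : Type*}

theorem exists_forall_eq_of_cross {κ X : Fin 3 → α} (hκ : Injective κ)
    (h : ∀ a b, a ≠ b → X a = κ b ∨ X a = X b) : ∃ K, ∀ a, X a = K := by
  refine ⟨X 0, fun a => ?_⟩
  have := hκ.ne (show (0 : Fin 3) ≠ 1 by decide)
  have := hκ.ne (show (0 : Fin 3) ≠ 2 by decide)
  have := hκ.ne (show (1 : Fin 3) ≠ 2 by decide)
  have := h 0 1 (by decide); have := h 1 0 (by decide); have := h 0 2 (by decide)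
  have := h 2 0 (by decide); have := h 1 2 (by decide); have := h 2 1 (by decide)
  fin_cases a <;> simp <;> grind

theorem eq_or_exists_forall_eq_of_diag {κ X : Fin 3 → α}
    (h : ∀ a b, a ≠ b → X a = κ a ∨ X a = X b) : X = κ ∨ ∃ W, ∀ a, X a = W := by
  by_cases hX : ∃ a, X a ≠ κ a
  · obtain ⟨a, ha⟩ := hX
    refine Or.inr ⟨X a, fun b => ?_⟩
    rcases eq_or_ne b a with rfl | hba
    · rfl
    · exact ((h a b hba.symm).resolve_left ha).symm
  · push Not at hX
    exact Or.inl (funext hX)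

theorem Function.Injective.not_forall_fin_three_eq_or_eq {κ : Fin 3 → α} (hκ : Injective κ)
    (u v : α) : ¬ ∀ a, κ a = u ∨ κ a = v := by
  classical
  intro h
  have hsub : Finset.univ.image κ ⊆ {u, v} := by
    intro x hx
    obtain ⟨a, -, rfl⟩ := Finset.mem_image.1 hx
    simpa using h a
  have := (Finset.card_le_card hsub).trans Finset.card_le_two
  rw [Finset.card_image_of_injective _ hκ] at this
  simp at this

theorem Function.Injective.not_forall_ne_fin_three_eq_or_eq {κ : Fin 3 → α} (hκ : Injective κ)
    (K : α) : ¬ ∀ a b, a ≠ b → κ a = K ∨ κ b = K := by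
  intro h
  have := hκ.ne (show (0 : Fin 3) ≠ 1 by decide)
  have := hκ.ne (show (0 : Fin 3) ≠ 2 by decide)
  have := hκ.ne (show (1 : Fin 3) ≠ 2 by decide)
  have := h 0 1 (by decide); have := h 0 2 (by decide); have := h 1 2 (by decide)
  grind

end Fin3

section Coloring

variable {V α : Type*} [AddCommGroup V] {Δ : Set V} {c : V → α}

def IsClosedColoring (Δ : Set V) (c : V → α) : Prop :=
  ∀ u ∈ Δ, ∀ v ∈ Δ, u + v ∈ Δ → c (u + v) = c u ∨ c (u + v) = c v

/-- Modelled on the coordinate vectors of `D_n`, whose signed pairwise sums are the roots. -/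
def IsDFrame {ι : Type*} (Δ : Set V) (F : ι → V) : Prop :=
  ∀ a b, a ≠ b → ∀ s t : ℤˣ, s • F a + t • F b ∈ Δ

namespace IsDFrame

variable {ι : Type*} {F : ι → V} {a b : ι}

theorem add_mem (hF : IsDFrame Δ F) (hab : a ≠ b) : F a + F b ∈ Δ := by
  simpa using hF a b hab 1 1

theorem sub_mem (hF : IsDFrame Δ F) (hab : a ≠ b) : F a - F b ∈ Δ := by
  simpa [sub_eq_add_neg] using hF a b hab 1 (-1)

theorem neg_sub_mem (hF : IsDFrame Δ F) (hab : a ≠ b) : -F a - F b ∈ Δ := by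
  simpa [sub_eq_add_neg] using hF a b hab (-1) (-1)

end IsDFrame

namespace IsClosedColoring

variable (hc : IsClosedColoring Δ c)
include hc

theorem eq_or_eq_of_add_eq {u v w : V} (hu : u ∈ Δ) (hv : v ∈ Δ) (hw : w ∈ Δ)
    (h : u + v = w) : c w = c u ∨ c w = c v := by
  subst h
  exact hc u hu v hv hw

/-- With `g = F 3`: the color of `F a ± g` does not depend on `a`, while that of `-F a - g` is
either `κ a` or constant; the splittings `F a - F b = (F a + g) + (-F b - g)` and
`-F a - g = (-F a - F b) + (F b - g)` exclude both options. -/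
theorem false_of_rotating {F : Fin 4 → V} (hF : IsDFrame Δ F) {κ : Fin 3 → α}
    (hκ : Injective κ) (hrot : ∀ a b : Fin 3, a ≠ b → c (F a.castSucc - F b.castSucc) = κ b) :
    False := by
  set g := F (Fin.last 3)
  have hff : ∀ {a b : Fin 3}, a ≠ b → a.castSucc ≠ b.castSucc := (Fin.castSucc_injective 3).ne
  have hfg : ∀ a : Fin 3, a.castSucc ≠ Fin.last 3 := Fin.castSucc_ne_last
  obtain ⟨K, hK⟩ := exists_forall_eq_of_cross hκ (X := fun a => c (F a.castSucc + g))
    fun a b hab => by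
      rw [← hrot a b hab]
      exact hc.eq_or_eq_of_add_eq (hF.sub_mem (hff hab)) (hF.add_mem (hfg b))
        (hF.add_mem (hfg a)) (by abel)
  obtain ⟨K', hK'⟩ := exists_forall_eq_of_cross hκ (X := fun a => c (F a.castSucc - g))
    fun a b hab => by
      rw [← hrot a b hab]
      exact hc.eq_or_eq_of_add_eq (hF.sub_mem (hff hab)) (hF.sub_mem (hfg b))
        (hF.sub_mem (hfg a)) (by abel)
  rcases eq_or_exists_forall_eq_of_diag (κ := κ) (X := fun a => c (-F a.castSucc - g))
    (fun a b hab => by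
      rw [← hrot b a hab.symm]
      exact hc.eq_or_eq_of_add_eq (hF.sub_mem (hff hab.symm)) (hF.neg_sub_mem (hfg b))
        (hF.neg_sub_mem (hfg a)) (by abel)) with hW | ⟨W, hW⟩
  · refine hκ.not_forall_ne_fin_three_eq_or_eq K' fun a b hab => ?_
    have ha := hc.eq_or_eq_of_add_eq (hF.neg_sub_mem (hff hab)) (hF.sub_mem (hfg b))
      (hF.neg_sub_mem (hfg a))
      (show -F a.castSucc - F b.castSucc + (F b.castSucc - g) = _ by abel)
    have hb := hc.eq_or_eq_of_add_eq (hF.neg_sub_mem (hff hab)) (hF.sub_mem (hfg a))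
      (hF.neg_sub_mem (hfg b))
      (show -F a.castSucc - F b.castSucc + (F a.castSucc - g) = _ by abel)
    rw [congrFun hW a, hK' b] at ha
    rw [congrFun hW b, hK' a] at hb
    grind [hκ.ne hab]
  · refine hκ.not_forall_fin_three_eq_or_eq K W fun b => ?_
    obtain ⟨a, hab⟩ := exists_ne b
    have := hc.eq_or_eq_of_add_eq (hF.add_mem (hfg a)) (hF.neg_sub_mem (hfg b))
      (hF.sub_mem (hff hab)) (by abel)
    rwa [hrot a b hab, hK a, hW b] at this

variable (hneg : ∀ v ∈ Δ, -v ∈ Δ)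
include hneg

theorem eq_of_add_mem_of_symm {u v : V} (hsym : ∀ v ∈ Δ, c (-v) = c v) (hu : u ∈ Δ) (hv : v ∈ Δ)
    (huv : u + v ∈ Δ) : c u = c v := by
  have h1 := hc.eq_or_eq_of_add_eq huv (hneg v hv) hu (add_neg_cancel_right u v)
  have h2 := hc.eq_or_eq_of_add_eq huv (hneg u hu) hv (by abel)
  rw [hsym v hv] at h1
  rw [hsym u hu] at h2
  grind

theorem rotate {p q : V} (hp : p ∈ Δ) (hq : q ∈ Δ) (hpq : p + q ∈ Δ)
    (hqp : c q ≠ c p) (hqp' : c q ≠ c (-p)) :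
    c (p + q) = c q ∧ c (-q) = c p ∧ c (-(p + q)) = c (-p) := by
  have h1 := hc.eq_or_eq_of_add_eq hpq (hneg p hp) hq (by abel)
  have h2 := hc.eq_or_eq_of_add_eq hpq (hneg q hq) hp (by abel)
  have h3 := hc.eq_or_eq_of_add_eq (hneg _ hpq) hq (hneg p hp) (by abel)
  grind

theorem eq_or_eq_of_isDFrame {F : Fin 4 → V} (hF : IsDFrame Δ F)
    (h : c (F 1 - F 0) ≠ c (F 0 - F 1) ∨ ∀ v ∈ Δ, c (-v) = c v) :
    c (F 1 - F 2) = c (F 0 - F 1) ∨ c (F 1 - F 2) = c (F 1 - F 0) := by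
  have h01 : F 0 - F 1 ∈ Δ := hF.sub_mem (by decide)
  have h12 : F 1 - F 2 ∈ Δ := hF.sub_mem (by decide)
  have h02 : F 0 - F 1 + (F 1 - F 2) ∈ Δ := by
    rw [sub_add_sub_cancel]
    exact hF.sub_mem (by decide)
  rcases h with h | hsym
  · by_contra! hC
    obtain ⟨hr02, hr21, hr20⟩ := hc.rotate hneg h01 h12 h02 hC.1 (by rw [neg_sub]; exact hC.2)
    simp only [sub_add_sub_cancel, neg_sub] at hr02 hr21 hr20
    refine hc.false_of_rotating hF (κ := ![c (F 1 - F 0), c (F 0 - F 1), c (F 1 - F 2)]) ?_ ?_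
    · intro a b hab
      fin_cases a <;> fin_cases b <;> simp_all
    · intro a b hab
      fin_cases a <;> fin_cases b <;> simp_all
  · exact Or.inl (hc.eq_of_add_mem_of_symm hneg hsym h01 h12 h02).symm

end IsClosedColoring

end Coloring

theorem Fin.exists_notMem_of_card_lt {n : ℕ} {s : Finset (Fin n)} (hs : s.card < n) :
    ∃ l, l ∉ s := by
  obtain ⟨l, -, hl⟩ := Finset.exists_mem_notMem_of_card_lt_card (t := Finset.univ)
    (by simpa using hs : s.card < (Finset.univ : Finset (Fin n)).card)
  exact ⟨l, hl⟩

section RootsD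

variable {n : ℕ}

theorem eb_eq_single (i : Fin n) : eb i = Pi.single i 1 := by
  ext k
  simp [eb, Pi.single_apply]

theorem single_add_single_mem_rootsD {i j : Fin n} (hij : i ≠ j) (s t : ℤˣ) :
    Pi.single i (s : ℤ) + Pi.single j (t : ℤ) ∈ rootsD n := by
  wlog h : i < j generalizing i j s t
  · rw [add_comm]
    exact this hij.symm t s (lt_of_le_of_ne (not_lt.1 h) hij.symm)
  refine ⟨i, j, h, ?_⟩
  rcases Int.units_eq_one_or s with rfl | rfl <;> rcases Int.units_eq_one_or t with rfl | rfl <;>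
    simp [eb_eq_single, sub_eq_add_neg, Pi.single_neg]

theorem mem_rootsD_iff {v : Fin n → ℤ} :
    v ∈ rootsD n ↔
      ∃ i j, i ≠ j ∧ ∃ s t : ℤˣ, v = Pi.single i (s : ℤ) + Pi.single j (t : ℤ) := by
  refine ⟨?_, fun ⟨i, j, hij, s, t, hv⟩ => hv ▸ single_add_single_mem_rootsD hij s t⟩
  rintro ⟨i, j, hij, rfl | rfl | rfl | rfl⟩
  · exact ⟨i, j, hij.ne, 1, 1, by simp [eb_eq_single]⟩
  · exact ⟨i, j, hij.ne, 1, -1, by simp [eb_eq_single, sub_eq_add_neg, Pi.single_neg]⟩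
  · exact ⟨i, j, hij.ne, -1, 1, by simp [eb_eq_single, Pi.single_neg]⟩
  · exact ⟨i, j, hij.ne, -1, -1, by simp [eb_eq_single, sub_eq_add_neg, Pi.single_neg]⟩

theorem neg_mem_rootsD {v : Fin n → ℤ} (hv : v ∈ rootsD n) : -v ∈ rootsD n := by
  obtain ⟨i, j, hij, s, t, rfl⟩ := mem_rootsD_iff.1 hv
  simpa [Pi.single_neg, add_comm] using single_add_single_mem_rootsD hij (-s) (-t)

theorem isDFrame_single {ι : Type*} {e : ι → Fin n} (he : Injective e) (ε : ι → ℤˣ) :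
    IsDFrame (rootsD n) fun a => Pi.single (e a) (ε a : ℤ) := by
  intro a b hab s t
  simpa only [Units.smul_def, ← Pi.single_smul', smul_eq_mul, Units.val_mul] using
    single_add_single_mem_rootsD (he.ne hab) (s * ε a) (t * ε b)

theorem rootsD_subset_of_rootClosed (hn : 3 ≤ n) {i j : Fin n} {G : Set (Fin n → ℤ)}
    (hG : RootClosed (rootsD n) G)
    (hadj : ∀ p, (p = i ∨ p = j) → ∀ k, k ≠ i → k ≠ j → ∀ a b : ℤˣ,
      Pi.single p (a : ℤ) + Pi.single k (b : ℤ) ∈ G) :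
    rootsD n ⊆ G := by
  intro y hy
  obtain ⟨p, q, hpq, a, b, rfl⟩ := mem_rootsD_iff.1 hy
  obtain ⟨k, hk⟩ := Fin.exists_notMem_of_card_lt (s := {i, j})
    (Finset.card_le_two.trans_lt (by omega))
  simp only [Finset.mem_insert, Finset.mem_singleton, not_or] at hk
  by_cases hp : p = i ∨ p = j <;> by_cases hq : q = i ∨ q = j
  · have e : (Pi.single p (a : ℤ) + Pi.single k ((1 : ℤˣ) : ℤ) +
        (Pi.single q (b : ℤ) + Pi.single k ((-1 : ℤˣ) : ℤ)) : Fin n → ℤ) =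
        Pi.single p (a : ℤ) + Pi.single q (b : ℤ) := by
      simp [Pi.single_neg]
      abel
    rw [← e] at hy ⊢
    exact hG _ (hadj p hp k hk.1 hk.2 a 1) _ (hadj q hq k hk.1 hk.2 b (-1)) hy
  · push Not at hq
    exact hadj p hp q hq.1 hq.2 a b
  · push Not at hp
    rw [add_comm]
    exact hadj q hq p hp.1 hp.2 b a
  · push Not at hp hq
    have e : (Pi.single i ((1 : ℤˣ) : ℤ) + Pi.single p (a : ℤ) +
        (Pi.single i ((-1 : ℤˣ) : ℤ) + Pi.single q (b : ℤ)) : Fin n → ℤ) =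
        Pi.single p (a : ℤ) + Pi.single q (b : ℤ) := by
      simp [Pi.single_neg]
      abel
    rw [← e] at hy ⊢
    exact hG _ (hadj i (Or.inl rfl) p hp.1 hp.2 1 a) _ (hadj i (Or.inl rfl) q hq.1 hq.2 (-1) b) hy

end RootsD

section TwoColors

variable {n : ℕ} {α : Type*} {c : (Fin n → ℤ) → α}

theorem IsClosedColoring.rootClosed_setOf {Δ : Set (Fin n → ℤ)} (hc : IsClosedColoring Δ c)
    (S : Set α) : RootClosed Δ {v | v ∈ Δ ∧ c v ∈ S} := by
  rintro u ⟨hu, hcu⟩ v ⟨hv, hcv⟩ huv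
  exact ⟨huv, (hc u hu v hv huv).elim (· ▸ hcu) (· ▸ hcv)⟩

theorem IsClosedColoring.eq_or_eq_of_rootsD_adj (hn : 4 ≤ n) (hc : IsClosedColoring (rootsD n) c)
    {i j k : Fin n} (hij : i ≠ j) (hki : k ≠ i) (hkj : k ≠ j) (s t τ : ℤˣ) {x : Fin n → ℤ}
    (hx : Pi.single i (s : ℤ) + Pi.single j (t : ℤ) = x)
    (h : c (-x) ≠ c x ∨ ∀ v ∈ rootsD n, c (-v) = c v) :
    c (Pi.single i ((-s : ℤˣ) : ℤ) + Pi.single k (τ : ℤ)) = c x ∨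
      c (Pi.single i ((-s : ℤˣ) : ℤ) + Pi.single k (τ : ℤ)) = c (-x) := by
  obtain ⟨l, hl⟩ := Fin.exists_notMem_of_card_lt (s := {i, j, k})
    (Finset.card_le_three.trans_lt (by omega))
  simp only [Finset.mem_insert, Finset.mem_singleton, not_or] at hl
  have he : Injective ![j, i, k, l] := by
    rw [← List.nodup_ofFn]
    simp
    grind
  set F : Fin 4 → Fin n → ℤ :=
    fun a => Pi.single (![j, i, k, l] a) ((![t, -s, -τ, 1] a : ℤˣ) : ℤ)
  have hF : IsDFrame (rootsD n) F := isDFrame_single he _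
  have h01 : F 0 - F 1 = x := by
    simp [F, ← hx, Pi.single_neg, add_comm]
  have h10 : F 1 - F 0 = -x := by
    simp [F, ← hx, Pi.single_neg]
    abel
  have h12 : F 1 - F 2 = Pi.single i ((-s : ℤˣ) : ℤ) + Pi.single k (τ : ℤ) := by
    simp [F, Pi.single_neg, sub_eq_add_neg]
  simpa only [h01, h10, h12] using
    hc.eq_or_eq_of_isDFrame (fun v hv => neg_mem_rootsD hv) hF (by rwa [h01, h10])

theorem IsClosedColoring.eq_or_eq_of_rootsD_share (hn : 4 ≤ n)
    (hc : IsClosedColoring (rootsD n) c) {i j k : Fin n} (hij : i ≠ j) (hki : k ≠ i)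
    (hkj : k ≠ j) (s t σ τ : ℤˣ) {x : Fin n → ℤ}
    (hx : Pi.single i (s : ℤ) + Pi.single j (t : ℤ) = x)
    (h : c (-x) ≠ c x ∨ ∀ v ∈ rootsD n, c (-v) = c v) :
    c (Pi.single i (σ : ℤ) + Pi.single k (τ : ℤ)) = c x ∨
      c (Pi.single i (σ : ℤ) + Pi.single k (τ : ℤ)) = c (-x) := by
  obtain hσ | hσ : σ = -s ∨ σ = s := by
    rcases Int.units_eq_one_or σ with rfl | rfl <;> rcases Int.units_eq_one_or s with rfl | rfl <;>
      simp
  · subst σ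
    exact hc.eq_or_eq_of_rootsD_adj hn hij hki hkj s t τ hx h
  · subst σ
    have hx' : Pi.single i ((-s : ℤˣ) : ℤ) + Pi.single j ((-t : ℤˣ) : ℤ) = -x := by
      simp [← hx, Pi.single_neg, add_comm]
    have := hc.eq_or_eq_of_rootsD_adj hn hij hki hkj (-s) (-t) τ hx' (by rwa [neg_neg, ne_comm])
    rwa [neg_neg, neg_neg, or_comm] at this

theorem IsClosedColoring.exists_rootsD_eq_or_eq (hn : 4 ≤ n)
    (hc : IsClosedColoring (rootsD n) c) : ∃ A B, ∀ v ∈ rootsD n, c v = A ∨ c v = B := by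
  obtain ⟨x, hx, hgood⟩ : ∃ x ∈ rootsD n, c (-x) ≠ c x ∨ ∀ v ∈ rootsD n, c (-v) = c v := by
    by_cases hsym : ∀ v ∈ rootsD n, c (-v) = c v
    · have h01 : (⟨0, by omega⟩ : Fin n) ≠ ⟨1, by omega⟩ := by simp
      exact ⟨_, single_add_single_mem_rootsD h01 1 1, Or.inr hsym⟩
    · push Not at hsym
      obtain ⟨x, hx, h⟩ := hsym
      exact ⟨x, hx, Or.inl h⟩
  obtain ⟨i, j, hij, s, t, hxij⟩ := mem_rootsD_iff.1 hx
  refine ⟨c x, c (-x), fun v hv => (rootsD_subset_of_rootClosed (i := i) (j := j) (by omega)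
    (hc.rootClosed_setOf {_, _}) ?_ hv).2⟩
  rintro p (rfl | rfl) k hki hkj σ τ
  · exact ⟨single_add_single_mem_rootsD (Ne.symm hki) σ τ,
      hc.eq_or_eq_of_rootsD_share hn hij hki hkj s t σ τ hxij.symm hgood⟩
  · exact ⟨single_add_single_mem_rootsD (Ne.symm hkj) σ τ,
      hc.eq_or_eq_of_rootsD_share hn hij.symm hkj hki t s σ τ (hxij.trans (add_comm _ _)).symm
        hgood⟩

end TwoColors

section Partition

variable {ι : Type*}

theorem setOf_mem_eq_singleton {β : Type*} {P : ι → Set β}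
    (hdisj : Pairwise fun i j => Disjoint (P i) (P j)) {v : β} {i : ι} (hv : v ∈ P i) :
    {j | v ∈ P j} = {i} := by
  ext j
  refine ⟨fun hj => ?_, fun hj => hj ▸ hv⟩
  by_contra hji
  exact Set.disjoint_left.1 (hdisj hji) hj hv

theorem isClosedColoring_of_partition {n : ℕ} {Δ : Set (Fin n → ℤ)} {P : ι → Set (Fin n → ℤ)}
    (hcover : Δ ⊆ ⋃ i, P i)
    (hdisj : Pairwise fun i j => Disjoint (P i) (P j)) (hcl : ∀ i, RootClosed Δ (P i))
    (hcl2 : ∀ i j, i ≠ j → RootClosed Δ (P i ∪ P j)) :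
    IsClosedColoring Δ fun v => {i | v ∈ P i} := by
  intro u hu v hv huv
  obtain ⟨i, hi⟩ := Set.mem_iUnion.1 (hcover hu)
  obtain ⟨j, hj⟩ := Set.mem_iUnion.1 (hcover hv)
  simp only [setOf_mem_eq_singleton hdisj hi, setOf_mem_eq_singleton hdisj hj]
  by_cases hij : i = j
  · subst hij
    exact Or.inl (setOf_mem_eq_singleton hdisj (hcl i u hi v hj huv))
  · exact (hcl2 i j hij u (Or.inl hi) v (Or.inr hj) huv).imp
      (setOf_mem_eq_singleton hdisj) (setOf_mem_eq_singleton hdisj)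

end Partition

theorem stmt7 (n : ℕ) (hn : 4 ≤ n) (m : ℕ) (hm : 3 ≤ m) :
    ¬ ∃ P : Fin m → Set (Fin n → ℤ),
      (⋃ i, P i) = rootsD n ∧
      (∀ i, (P i).Nonempty) ∧
      (Pairwise fun i j => Disjoint (P i) (P j)) ∧
      (∀ i, RootClosed (rootsD n) (P i)) ∧
      (∀ i j, i ≠ j → RootClosed (rootsD n) (P i ∪ P j)) := by
  rintro ⟨P, hcover, hne, hdisj, hcl, hcl2⟩
  obtain ⟨A, B, hAB⟩ :=
    (isClosedColoring_of_partition hcover.ge hdisj hcl hcl2).exists_rootsD_eq_or_eq hn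
  choose w hw using fun a : Fin 3 => hne (Fin.castLE hm a)
  have hinj : Injective fun a => {i | w a ∈ P i} := by
    rw [funext fun a => setOf_mem_eq_singleton hdisj (hw a)]
    exact Set.singleton_injective.comp (Fin.castLE_injective hm)
  exact hinj.not_forall_fin_three_eq_or_eq A B fun a =>
    hAB _ (hcover ▸ Set.mem_iUnion.2 ⟨_, hw a⟩)
end

section
/- Let Δ = {e_i - e_j : 0 ≤ i ≠ j ≤ n} ⊆ ℤ^{n+1} be the root system of type A_n and let P be the partition of {0,…,n} × {0,…,n} induced by Δ_i = {e_j - e_i : j ≠ i}. For each m-regular partition Δ = S_1 ⊔ … ⊔ S_m with m ≥ 3 into closed parts with pairwise closed unions, there exists a set partition {0, 1, …, n} = T_1 ⊔ … ⊔ T_m such that, after possibly replacing every root by its negative, S_ℓ = {e_j - e_i : i ∈ T_ℓ, 0 ≤ j ≤ n, j ≠ i} for all ℓ. -/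
/-- The root system of type `A_n`, realized as `{e_i - e_j : i ≠ j}` in `ℤ^{n+1}`. -/
def rootsA (n : ℕ) : Set (Fin (n + 1) → ℤ) :=
  {v | ∃ i j : Fin (n + 1), i ≠ j ∧ v = eb i - eb j}

/-- The union of rows indexed by `T`: `{e_j - e_i : i ∈ T, j ≠ i}`. -/
def rowSet {n : ℕ} (T : Set (Fin (n + 1))) : Set (Fin (n + 1) → ℤ) :=
  {v | ∃ i ∈ T, ∃ j : Fin (n + 1), j ≠ i ∧ v = eb j - eb i}

section Abstract

variable {α β : Type*}

def AxT (c : α → α → β) : Prop :=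
  ∀ u v w : α, u ≠ v → v ≠ w → u ≠ w → c u w = c u v ∨ c u w = c v w

variable {c : α → α → β}

lemma axT_flip (h : AxT c) : AxT (fun u v => c v u) := by
  intro u v w huv hvw huw
  rcases h w v u hvw.symm huv.symm huw.symm with h1 | h1
  · exact Or.inr h1
  · exact Or.inl h1

lemma Rm (h : AxT c) {i j k : α} (hij : i ≠ j) (hik : i ≠ k) (hjk : j ≠ k)
    (hne : c i j ≠ c i k) : c k j = c i j ∧ c j k = c i k := by
  constructor
  · rcases h i k j hik hjk.symm hij with h1 | h1
    · exact absurd h1 hne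
    · exact h1.symm
  · rcases h i j k hij hjk hik with h1 | h1
    · exact absurd h1.symm hne
    · exact h1.symm

lemma Cm (h : AxT c) {i j k : α} (hij : i ≠ j) (hik : i ≠ k) (hjk : j ≠ k)
    (hne : c i k ≠ c j k) : c i j = c i k ∧ c j i = c j k := by
  constructor
  · rcases h i j k hij hjk hik with h1 | h1
    · exact h1.symm
    · exact absurd h1 hne
  · rcases h j i k hij.symm hik hjk with h1 | h1
    · exact h1.symm
    · exact absurd h1 (fun e => hne e.symm)

lemma Sub1 (h : AxT c) {i j k : α} (hij : i ≠ j) (hik : i ≠ k) (hjk : j ≠ k)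
    (hne : c i j ≠ c i k) : ∀ l, l ≠ j → c l j = c i j ∨ c l j = c i k := by
  intro l hlj
  by_cases hli : l = i
  · subst hli; exact Or.inl rfl
  by_cases hlk : l = k
  · subst hlk; exact Or.inl (Rm h hij hik hjk hne).1
  by_contra hcon
  push_neg at hcon
  obtain ⟨h1, h2⟩ := hcon
  have hkj : c k j = c i j := (Rm h hij hik hjk hne).1
  have e1 := Cm h (i := l) (j := i) (k := j) hli hlj hij h1
  have e2 := Cm h (i := l) (j := k) (k := j) hlk hlj hjk.symm (fun e => h1 (e.trans hkj))
  have e3 := Cm h (i := l) (j := i) (k := k) hli hlk hik (fun e => h2 (e2.1.symm.trans e))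
  exact hne (e1.2.symm.trans e3.2)

lemma Sub1' (h : AxT c) {b x y : α} (hxy : x ≠ y) (hxb : x ≠ b) (hyb : y ≠ b)
    (hne : c x b ≠ c y b) : ∀ l, l ≠ x → c x l = c x b ∨ c x l = c y b :=
  fun l hl => Sub1 (axT_flip h) (i := b) (j := x) (k := y) hxb.symm hyb.symm hxy hne l hl

lemma Rm' (h : AxT c) {b x y : α} (hxy : x ≠ y) (hxb : x ≠ b) (hyb : y ≠ b)
    (hne : c x b ≠ c y b) : c x y = c x b ∧ c y x = c y b :=
  Rm (axT_flip h) (i := b) (j := x) (k := y) hxb.symm hyb.symm hxy hne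

lemma NBcore (h : AxT c) {i j k b x y : α}
    (hij : i ≠ j) (hik : i ≠ k) (hjk : j ≠ k)
    (hxy : x ≠ y) (hxb : x ≠ b) (hyb : y ≠ b)
    (hPQ : c i j ≠ c i k) (hAB : c x b ≠ c y b)
    (hPA : c i j = c x b)
    (hthird : ∃ l l' : α, l ≠ l' ∧ c l l' ≠ c i j ∧ c l l' ≠ c i k) : False := by
  have hRj : c k j = c i j := (Rm h hij hik hjk hPQ).1
  have hRk : c j k = c i k := (Rm h hij hik hjk hPQ).2
  have hCx : c x y = c x b := (Rm' h hxy hxb hyb hAB).1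
  have hCy : c y x = c y b := (Rm' h hxy hxb hyb hAB).2
  have F1 : ∀ l, l ≠ j → c l j = c i j ∨ c l j = c i k := Sub1 h hij hik hjk hPQ
  have F2 : ∀ l, l ≠ k → c l k = c i k ∨ c l k = c i j :=
    Sub1 h (i := i) (j := k) (k := j) hik hij hjk.symm (fun e => hPQ e.symm)
  have F3 : ∀ l, l ≠ x → c x l = c x b ∨ c x l = c y b := Sub1' h hxy hxb hyb hAB
  have F4 : ∀ l, l ≠ y → c y l = c y b ∨ c y l = c x b :=
    Sub1' h (x := y) (y := x) (b := b) hxy.symm hyb hxb (fun e => hAB e.symm)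
  have hBP : c y b ≠ c i j := fun e => hAB (e.trans hPA).symm
  by_cases hQB : c i k = c y b
  · -- Part II : the two color pairs coincide
    obtain ⟨l, l', hll', hR1, hR2⟩ := hthird
    have hl'j : l' ≠ j := by
      intro e; subst e
      rcases F1 l hll' with hh | hh
      · exact hR1 hh
      · exact hR2 hh
    have hl'k : l' ≠ k := by
      intro e; subst e
      rcases F2 l hll' with hh | hh
      · exact hR2 hh
      · exact hR1 hh
    have hjl' : c j l' = c l l' := by
      by_cases hlj : l = j
      · subst hlj; rfl
      · rcases h l j l' hlj hl'j.symm hll' with hh | hh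
        · exfalso
          rcases F1 l hlj with hh2 | hh2
          · exact hR1 (hh.trans hh2)
          · exact hR2 (hh.trans hh2)
        · exact hh.symm
    have hkl' : c k l' = c l l' := by
      by_cases hlk : l = k
      · subst hlk; rfl
      · rcases h l k l' hlk hl'k.symm hll' with hh | hh
        · exfalso
          rcases F2 l hlk with hh2 | hh2
          · exact hR2 (hh.trans hh2)
          · exact hR1 (hh.trans hh2)
        · exact hh.symm
    by_cases hbj : b = j
    · subst hbj
      -- row failure at k through (b, l') ; bound on column b, applied to y
      have F5 := Sub1 h (i := k) (j := b) (k := l') hjk.symm hl'k.symm hl'j.symm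
        (by rw [hRj, hkl']; exact fun e => hR1 e.symm)
      rcases F5 y hyb with hh | hh
      · exact hPQ ((hQB.trans hh).trans hRj).symm
      · exact hR2 ((hQB.trans hh).trans hkl').symm
    by_cases hbk : b = k
    · subst hbk
      have F5 := Sub1 h (i := j) (j := b) (k := l') hjk hl'j.symm hl'k.symm
        (by rw [hRk, hjl']; exact fun e => hR2 e.symm)
      rcases F5 x hxb with hh | hh
      · exact hPQ (hPA.trans (hh.trans hRk))
      · exact hR1 (hPA.trans (hh.trans hjl')).symm
    -- now b ∉ {j, k}
    by_cases hD : c j b = c l l'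
    · have hjx : j ≠ x := by
        intro e
        have hjx2 : c j l' = c x l' := by rw [e]
        rcases F3 l' (fun ee => hl'j (ee.trans e.symm)) with hh | hh
        · exact hR1 ((hjl'.symm.trans (hjx2.trans hh)).trans hPA.symm)
        · exact hR2 ((hjl'.symm.trans (hjx2.trans hh)).trans hQB.symm)
      have hjb : j ≠ b := fun e => hbj e.symm
      have F5 := Sub1' h (x := j) (y := x) (b := b) hjx hjb hxb
        (by rw [hD]; exact fun e => hR1 (e.trans hPA.symm))
      rcases F5 k hjk.symm with hh | hh
      · exact hR2 ((hRk.symm.trans hh).trans hD).symm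
      · exact hPQ (hPA.trans (hRk.symm.trans hh).symm)
    · have hbl' : b ≠ l' := fun e => hD (by rw [e, hjl'])
      have F5 := Sub1 h (i := j) (j := b) (k := l') (fun e => hbj e.symm) hl'j.symm hbl'
        (fun e => hD (e.trans hjl'))
      have hx5 : c x b = c j b := by
        rcases F5 x hxb with hh | hh
        · exact hh
        · exact absurd (hPA.trans (hh.trans hjl')).symm hR1
      have hy5 : c y b = c j b := by
        rcases F5 y hyb with hh | hh
        · exact hh
        · exact absurd (hQB.trans (hh.trans hjl')).symm hR2
      exact hAB (hx5.trans hy5.symm)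
  · -- Part I : the color pairs differ (c i k ≠ c y b)
    have hxj : x ≠ j := by
      intro e; subst e
      rcases F3 k hjk.symm with hh | hh
      · exact hPQ (hPA.trans (hRk.symm.trans hh).symm)
      · exact hQB (hRk.symm.trans hh)
    have hxk : x ≠ k := by
      intro e; subst e
      rcases F2 y hxy.symm with hh | hh
      · exact hQB (hh.symm.trans hCy)
      · exact hBP (hCy.symm.trans hh)
    have hxi : x ≠ i := by
      intro e; subst e
      rcases F3 k hik.symm with hh | hh
      · exact hPQ (hPA.trans hh.symm)
      · exact hQB hh
    have hyi : y ≠ i := by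
      intro e; subst e
      rcases F4 k hik.symm with hh | hh
      · exact hQB hh
      · exact hPQ (hPA.trans hh.symm)
    have hyj : y ≠ j := by
      intro e; subst e
      rcases F4 k hjk.symm with hh | hh
      · exact hQB (hRk.symm.trans hh)
      · exact hPQ (hPA.trans (hRk.symm.trans hh).symm)
    by_cases hyk : y = k
    · subst hyk
      by_cases hbj : b = j
      · subst hbj
        exact hBP hRj
      by_cases hbi : b = i
      · subst hbi
        by_cases hWQ : c b x = c b y
        · have F5 := Sub1 h (i := b) (j := x) (k := j) hxi.symm hij hxj
            (by rw [hWQ]; exact fun e => hPQ e.symm)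
          rcases F5 y hxy.symm with hh | hh
          · exact hQB ((hCy.symm.trans hh).trans hWQ).symm
          · exact hBP (hCy.symm.trans hh)
        · have F5 := Sub1 h (i := b) (j := x) (k := y) hxi.symm hik hxy hWQ
          have hW1 : c y b = c b x := by
            rcases F5 y hxy.symm with hh | hh
            · exact hCy.symm.trans hh
            · exact absurd ((hCy.symm.trans hh)).symm hQB
          have F6 := Sub1 h (i := b) (j := y) (k := x) hik hxi.symm hxy.symm
            (fun e => hWQ e.symm)
          rcases F6 x hxy with hh2 | hh2
          · exact hPQ (hPA.trans (hCx.symm.trans hh2))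
          · exact hAB ((hCx.symm.trans hh2).trans hW1.symm)
      · rcases h y j b hyj (fun e => hbj e.symm) hyb with hh | hh
        · exact hBP (hh.trans hRj)
        · have F6 := Sub1 h (i := j) (j := y) (k := b) hjk (fun e => hbj e.symm) hyb
            (fun e => hQB (hRk.symm.trans (e.trans hh.symm)))
          rcases F6 x hxy with hh2 | hh2
          · exact hPQ (hPA.trans (hCx.symm.trans (hh2.trans hRk)))
          · exact hAB (hCx.symm.trans (hh2.trans hh.symm))
    · -- y not in {i,j,k}
      have hxkP : c x k = c x b := by
        rcases F3 k (fun e => hxk e.symm) with h3 | h3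
        · exact h3
        · exfalso
          rcases F2 x hxk with hh | hh
          · exact hQB (hh.symm.trans h3)
          · exact hBP (hh.symm.trans h3).symm
      have hyjP : c y j = c x b := by
        rcases F4 j (fun e => hyj e.symm) with h4 | h4
        · exfalso
          rcases F1 y hyj with hh | hh
          · exact hBP (h4.symm.trans hh)
          · exact hQB (h4.symm.trans hh).symm
        · exact h4
      by_cases hbj : b = j
      · subst hbj
        rcases F1 y hyj with hh | hh
        · exact hBP hh
        · exact hQB hh.symm
      by_cases hbk : b = k
      · subst hbk
        rcases F2 y hyk with hh | hh
        · exact hQB hh.symm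
        · exact hBP hh
      by_cases hbi : b = i
      · subst hbi
        have hjiB : c j b = c y b := by
          rcases h y j b hyj hij.symm hyi with hh | hh
          · exact absurd (hh.trans hyjP).symm hAB
          · exact hh.symm
        have F7 := Sub1' h (x := j) (y := x) (b := b) hxj.symm hij.symm hxi
          (by rw [hjiB]; exact fun e => hAB e.symm)
        rcases F7 k hjk.symm with hh | hh
        · exact hQB ((hRk.symm.trans hh).trans hjiB)
        · exact hPQ (hPA.trans (hRk.symm.trans hh).symm)
      · -- fully generic
        have hjbB : c j b = c y b := by
          rcases h y j b hyj (fun e => hbj e.symm) hyb with hh | hh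
          · exact absurd (hh.trans hyjP).symm hAB
          · exact hh.symm
        have F8 := Sub1 h (i := j) (j := k) (k := b) hjk (fun e => hbj e.symm)
          (fun e => hbk e.symm) (fun e => hQB (hRk.symm.trans (e.trans hjbB)))
        rcases F8 x hxk with hh | hh
        · exact hPQ (hPA.trans (hxkP.symm.trans (hh.trans hRk)))
        · exact hAB (hxkP.symm.trans (hh.trans hjbB))

lemma NoBoth (h : AxT c) {i j k b x y : α}
    (hij : i ≠ j) (hik : i ≠ k) (hjk : j ≠ k)
    (hxy : x ≠ y) (hxb : x ≠ b) (hyb : y ≠ b)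
    (hPQ : c i j ≠ c i k) (hAB : c x b ≠ c y b)
    (hthird : ∃ l l' : α, l ≠ l' ∧ c l l' ≠ c i j ∧ c l l' ≠ c i k) : False := by
  have hthird' : ∃ l l' : α, l ≠ l' ∧ c l l' ≠ c i k ∧ c l l' ≠ c i j := by
    obtain ⟨l, l', a, b', c'⟩ := hthird; exact ⟨l, l', a, c', b'⟩
  by_cases hxj : x = j
  · subst hxj
    have hRk : c x k = c i k := (Rm h hij hik hjk hPQ).2
    rcases Sub1' h hxy hxb hyb hAB k hjk.symm with h1 | h1
    · exact NBcore h hik hij hjk.symm hxy hxb hyb (fun e => hPQ e.symm) hAB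
        (hRk.symm.trans h1) hthird'
    · exact NBcore h hik hij hjk.symm hxy.symm hyb hxb (fun e => hPQ e.symm)
        (fun e => hAB e.symm) (hRk.symm.trans h1) hthird'
  · rcases Sub1 h hij hik hjk hPQ x hxj with h1 | h1 <;>
      rcases Sub1' h hxy hxb hyb hAB j (fun e => hxj e.symm) with h2 | h2
    · exact NBcore h hij hik hjk hxy hxb hyb hPQ hAB (h1.symm.trans h2) hthird
    · exact NBcore h hij hik hjk hxy.symm hyb hxb hPQ (fun e => hAB e.symm)
        (h1.symm.trans h2) hthird
    · exact NBcore h hik hij hjk.symm hxy hxb hyb (fun e => hPQ e.symm) hAB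
        (h1.symm.trans h2) hthird'
    · exact NBcore h hik hij hjk.symm hxy.symm hyb hxb (fun e => hPQ e.symm)
        (fun e => hAB e.symm) (h1.symm.trans h2) hthird'

lemma dichotomy {m : ℕ} (hm : 3 ≤ m) {c : α → α → Fin m} (h : AxT c)
    (hsurj : ∀ R : Fin m, ∃ u v : α, u ≠ v ∧ c u v = R) :
    (∀ u v w : α, v ≠ u → w ≠ u → c u v = c u w) ∨
    (∀ u v w : α, v ≠ u → w ≠ u → c v u = c w u) := by
  by_cases hrow : ∃ i j k : α, i ≠ j ∧ i ≠ k ∧ j ≠ k ∧ c i j ≠ c i k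
  · right
    intro u v w hvu hwu
    by_contra hne
    obtain ⟨i, j, k, hij, hik, hjk, hPQ⟩ := hrow
    have hthird : ∃ R : Fin m, R ≠ c i j ∧ R ≠ c i k := by
      by_contra hno
      push_neg at hno
      have hsubset : (Finset.univ : Finset (Fin m)) ⊆ {c i j, c i k} := by
        intro R _
        by_cases hR : R = c i j
        · simp [hR]
        · simp [hno R hR]
      have h2 : m ≤ 2 := by
        calc m = (Finset.univ : Finset (Fin m)).card := (Finset.card_fin m).symm
          _ ≤ ({c i j, c i k} : Finset (Fin m)).card := Finset.card_le_card hsubset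
          _ ≤ 2 := le_trans (Finset.card_insert_le _ _) (by simp)
      omega
    obtain ⟨R, hr1, hr2⟩ := hthird
    obtain ⟨l, l', hll', hcl⟩ := hsurj R
    exact NoBoth h hij hik hjk (x := v) (y := w) (b := u)
      (fun e => hne (by rw [e])) hvu hwu hPQ hne
      ⟨l, l', hll', by rw [hcl]; exact hr1, by rw [hcl]; exact hr2⟩
  · left
    intro u v w hvu hwu
    by_contra hne2
    exact hrow ⟨u, v, w, hvu.symm, hwu.symm, fun e => hne2 (by rw [e]), hne2⟩

end Abstract

theorem stmt10 (n : ℕ) (m : ℕ) (hm : 3 ≤ m) (S : Fin m → Set (Fin (n + 1) → ℤ))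
    (hcover : (⋃ ℓ, S ℓ) = rootsA n)
    (hne : ∀ ℓ, (S ℓ).Nonempty)
    (hdisj : Pairwise fun ℓ ℓ' => Disjoint (S ℓ) (S ℓ'))
    (hclosed : ∀ ℓ, RootClosed (rootsA n) (S ℓ))
    (hclosed2 : ∀ ℓ ℓ', ℓ ≠ ℓ' → RootClosed (rootsA n) (S ℓ ∪ S ℓ')) :
    ∃ T : Fin m → Set (Fin (n + 1)),
      (⋃ ℓ, T ℓ) = Set.univ ∧
      (Pairwise fun ℓ ℓ' => Disjoint (T ℓ) (T ℓ')) ∧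
      ((∀ ℓ, S ℓ = rowSet (T ℓ)) ∨ (∀ ℓ, S ℓ = (fun v => -v) '' rowSet (T ℓ))) := by
  classical
  have hsub : ∀ ℓ, S ℓ ⊆ rootsA n := fun ℓ => hcover ▸ Set.subset_iUnion S ℓ
  have hex : ∀ u v : Fin (n + 1), u ≠ v → ∃ ℓ, eb v - eb u ∈ S ℓ := by
    intro u v huv
    have hmem : eb v - eb u ∈ rootsA n := ⟨v, u, fun e => huv e.symm, rfl⟩
    rw [← hcover] at hmem
    exact Set.mem_iUnion.mp hmem
  set c : Fin (n + 1) → Fin (n + 1) → Fin m := fun u v =>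
    if h : ∃ ℓ, eb v - eb u ∈ S ℓ then h.choose else ⟨0, by omega⟩ with hc_def
  have hc : ∀ u v, u ≠ v → eb v - eb u ∈ S (c u v) := by
    intro u v huv
    have h := hex u v huv
    simp only [hc_def, dif_pos h]
    exact h.choose_spec
  have hcu : ∀ u v ℓ, u ≠ v → eb v - eb u ∈ S ℓ → c u v = ℓ := by
    intro u v ℓ huv hmem
    by_contra hne2
    exact Set.disjoint_left.mp (hdisj hne2) (hc u v huv) hmem
  have hax : AxT c := by
    intro u v w huv hvw huw
    have h1 := hc u v huv
    have h2 := hc v w hvw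
    have hsum : (eb v - eb u) + (eb w - eb v) = eb w - eb u := by ring
    have hroot : eb w - eb u ∈ rootsA n := ⟨w, u, fun e => huw e.symm, rfl⟩
    by_cases he : c u v = c v w
    · left
      have hmem := hclosed (c u v) _ h1 _ (he ▸ h2) (by rw [hsum]; exact hroot)
      rw [hsum] at hmem
      exact hcu u w _ huw hmem
    · have hmem := hclosed2 _ _ he _ (Set.mem_union_left _ h1) _ (Set.mem_union_right _ h2)
        (by rw [hsum]; exact hroot)
      rw [hsum] at hmem
      rcases hmem with hh | hh
      · exact Or.inl (hcu u w _ huw hh)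
      · exact Or.inr (hcu u w _ huw hh)
  have hsurj : ∀ R : Fin m, ∃ u v : Fin (n + 1), u ≠ v ∧ c u v = R := by
    intro R
    obtain ⟨r, hr⟩ := hne R
    obtain ⟨a, b, hab, rfl⟩ := hsub R hr
    exact ⟨b, a, fun e => hab e.symm, hcu b a R (fun e => hab e.symm) hr⟩
  have hnontriv : Nontrivial (Fin (n + 1)) := by
    obtain ⟨r0, hr0⟩ := hne ⟨0, by omega⟩
    obtain ⟨a0, b0, hab0, _⟩ := hsub _ hr0
    exact ⟨⟨a0, b0, hab0⟩⟩
  rcases dichotomy hm hax hsurj with hmono | hmono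
  · -- row case
    set f : Fin (n + 1) → Fin m := fun u => c u (exists_ne u).choose with hf_def
    have hf : ∀ u v, v ≠ u → c u v = f u := fun u v hv =>
      hmono u v _ hv (exists_ne u).choose_spec
    refine ⟨fun ℓ => {u | f u = ℓ}, ?_, ?_, Or.inl ?_⟩
    · ext u
      simp only [Set.mem_iUnion, Set.mem_setOf_eq, Set.mem_univ, iff_true]
      exact ⟨f u, rfl⟩
    · intro ℓ ℓ' hll'
      rw [Set.disjoint_left]
      intro u hu hu'
      exact hll' (hu.symm.trans hu')
    · intro ℓ
      ext v
      constructor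
      · intro hv
        obtain ⟨a, b, hab, rfl⟩ := hsub ℓ hv
        have hba : b ≠ a := fun e => hab e.symm
        have hcol : c b a = ℓ := hcu b a ℓ hba hv
        exact ⟨b, (hf b a hab).symm.trans hcol, a, hab, rfl⟩
      · rintro ⟨i₀, hi₀, j₀, hj₀, rfl⟩
        have hcol : c i₀ j₀ = ℓ := (hf i₀ j₀ hj₀).trans hi₀
        have := hc i₀ j₀ (fun e => hj₀ e.symm)
        rwa [hcol] at this
  · -- column case
    set g : Fin (n + 1) → Fin m := fun u => c (exists_ne u).choose u with hg_def
    have hg : ∀ u v, v ≠ u → c v u = g u := fun u v hv =>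
      hmono u v _ hv (exists_ne u).choose_spec
    refine ⟨fun ℓ => {u | g u = ℓ}, ?_, ?_, Or.inr ?_⟩
    · ext u
      simp only [Set.mem_iUnion, Set.mem_setOf_eq, Set.mem_univ, iff_true]
      exact ⟨g u, rfl⟩
    · intro ℓ ℓ' hll'
      rw [Set.disjoint_left]
      intro u hu hu'
      exact hll' (hu.symm.trans hu')
    · intro ℓ
      ext v
      constructor
      · intro hv
        obtain ⟨a, b, hab, rfl⟩ := hsub ℓ hv
        have hba : b ≠ a := fun e => hab e.symm
        have hcol : c b a = ℓ := hcu b a ℓ hba hv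
        refine ⟨eb b - eb a, ⟨a, (hg a b hba).symm.trans hcol, b, hba, rfl⟩, ?_⟩
        show -(eb b - eb a) = eb a - eb b
        ring
      · rintro ⟨w, ⟨i₀, hi₀, j₀, hj₀, rfl⟩, rfl⟩
        have hcol : c j₀ i₀ = ℓ := (hg i₀ j₀ hj₀).trans hi₀
        have hmem := hc j₀ i₀ hj₀
        rw [hcol] at hmem
        show -(eb j₀ - eb i₀) ∈ S ℓ
        have : -(eb j₀ - eb i₀) = eb i₀ - eb j₀ := by ring
        rwa [this]
end

section
/- Let Δ = Δ_1 ⊔ … ⊔ Δ_m (m ≥ 3) be a regular partition of the root system A_n = {e_i - e_j : 0 ≤ i ≠ j ≤ n}. If β, γ ∈ Δ with β - γ ∈ Δ, β ∈ Δ_1 with β also equal to a 'loop' (meaning -β ∈ Δ_1 as well), and -γ ∈ Δ_2 with 2 ≠ 1, then β - γ ∈ Δ_2. -/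
theorem RootClosed.add_mem_union {k : ℕ} {ι : Type*} {Δ : Set (Fin k → ℤ)}
    {P : ι → Set (Fin k → ℤ)} (hclosed : ∀ i, RootClosed Δ (P i))
    (hclosed2 : ∀ i j, i ≠ j → RootClosed Δ (P i ∪ P j)) {i j : ι} {x y : Fin k → ℤ}
    (hx : x ∈ P i) (hy : y ∈ P j) (hxy : x + y ∈ Δ) : x + y ∈ P i ∪ P j := by
  by_cases hij : i = j
  · subst hij
    rw [Set.union_self]
    exact hclosed i x hx y hy hxy
  · exact hclosed2 i j hij x (Or.inl hx) y (Or.inr hy) hxy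

/- The part containing `β - γ` is forced: adding `-β ∈ P a` to it gives the root `-γ ∈ P b`,
which must lie in that part or in `P a ≠ P b`. -/
theorem stmt12_general (n : ℕ) (m : ℕ) (P : Fin m → Set (Fin (n + 1) → ℤ))
    (hcover : (⋃ i, P i) = rootsA n)
    (hdisj : Pairwise fun i j => Disjoint (P i) (P j))
    (hclosed : ∀ i, RootClosed (rootsA n) (P i))
    (hclosed2 : ∀ i j, i ≠ j → RootClosed (rootsA n) (P i ∪ P j))
    (β γ : Fin (n + 1) → ℤ)
    (hdiff : β - γ ∈ rootsA n)
    (a b : Fin m) (hab : a ≠ b)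
    (hnβa : -β ∈ P a) (hnγb : -γ ∈ P b) :
    β - γ ∈ P b := by
  have index_eq : ∀ {i j x}, x ∈ P i → x ∈ P j → i = j := fun hi hj =>
    hdisj.eq (Set.not_disjoint_iff.mpr ⟨_, hi, hj⟩)
  obtain ⟨c, hc⟩ := Set.mem_iUnion.mp (hcover ▸ hdiff : β - γ ∈ ⋃ i, P i)
  have hγ : -γ ∈ rootsA n := hcover ▸ Set.mem_iUnion.mpr ⟨b, hnγb⟩
  have hsum : β - γ + -β = -γ := by abel
  have hunion := RootClosed.add_mem_union hclosed hclosed2 hc hnβa (hsum ▸ hγ)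
  rw [hsum] at hunion
  rcases hunion with hγc | hγa
  · exact index_eq hγc hnγb ▸ hc
  · exact absurd (index_eq hγa hnγb) hab

theorem stmt12 (n : ℕ) (m : ℕ) (hm : 3 ≤ m) (P : Fin m → Set (Fin (n + 1) → ℤ))
    (hcover : (⋃ i, P i) = rootsA n)
    (hne : ∀ i, (P i).Nonempty)
    (hdisj : Pairwise fun i j => Disjoint (P i) (P j))
    (hclosed : ∀ i, RootClosed (rootsA n) (P i))
    (hclosed2 : ∀ i j, i ≠ j → RootClosed (rootsA n) (P i ∪ P j))
    (β γ : Fin (n + 1) → ℤ) (hβ : β ∈ rootsA n) (hγ : γ ∈ rootsA n)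
    (hdiff : β - γ ∈ rootsA n)
    (a b : Fin m) (hab : a ≠ b)
    (hβa : β ∈ P a) (hnβa : -β ∈ P a) (hnγb : -γ ∈ P b) :
    β - γ ∈ P b :=
  stmt12_general n m P hcover hdisj hclosed hclosed2 β γ hdiff a b hab hnβa hnγb
end
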